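/- Let d_1, …, d_k be integers ≥ 2, let X be a set, h : X → ℝ, and g_1, …, g_k self-maps of X with |h(g_j(x))/d_j − h(x)| ≤ c for all j, x. Let W = {1,…,k}^ℕ with product measure μ = ∏ν, where ν({j}) = d_j/(d_1+⋯+d_k). For w ∈ W let ĥ_w(x) := lim_n h(g_{w_n}∘⋯∘g_{w_1}(x))/(d_{w_1}⋯d_{w_n}). Then the function ĥ'(x) := ∫_W ĥ_w(x) dμ(w) satisfies the functional equation ∑_{j=1}^k ĥ'(g_j(x)) = (d_1+⋯+d_k) ĥ'(x) for all x ∈ X, and |ĥ'(x) − h(x)| ≤ 2c. -/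

import Mathlib

open Filter Finset MeasureTheory

/-- `orbitW g w n x = g (w (n-1)) (⋯ (g (w 0) x))`: the random orbit along the word `w`,
applying `g (w 0)` first. -/
def orbitW {X : Type*} {k : ℕ} (g : Fin k → X → X) (w : ℕ → Fin k) : ℕ → X → X
  | 0 => fun x => x
  | n + 1 => fun x => g (w n) (orbitW g w n x)

/-!
Along a fixed word `w`, consecutive approximants `h (g_{w_{n-1}} ⋯ g_{w_0} x) / (d_{w_0} ⋯ d_{w_{n-1}})`
differ by at most `c / 2ⁿ`, so all of them lie within `2c` of `h x`. This bounds their integrals and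
dominates their convergence to `ĥ_w x`.
The `n`-th approximant depends only on the first `n` letters of `w`, and the cylinder of a word `s`
of length `n` has mass `d_{s_0} ⋯ d_{s_{n-1}} / Dⁿ`, `D = d_1 + ⋯ + d_k`, so the integral of the
approximant is `D⁻ⁿ ∑_{|s| = n} h (g_s x)`. Splitting off the first letter of `s` shows that the sum
over `j` of the `n`-th integrals at `g_j x` is `D` times the `(n+1)`-st integral at `x`; the
functional equation follows in the limit.
-/

lemma abs_sub_zero_le_two_mul_of_abs_succ_sub_le {a : ℕ → ℝ} {c : ℝ}
    (ha : ∀ n, |a (n + 1) - a n| ≤ c / 2 ^ n) (n : ℕ) : |a n - a 0| ≤ 2 * c := by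
  have hc : 0 ≤ c := by simpa using (abs_nonneg _).trans (ha 0)
  rw [abs_sub_comm, ← Real.dist_eq]
  calc dist (a 0) (a n) ≤ ∑ i ∈ range n, c * (1 / 2) ^ i :=
        dist_le_range_sum_of_dist_le n fun {i} _ => by
          simpa [Real.dist_eq, abs_sub_comm, div_eq_mul_inv] using ha i
    _ = c * ∑ i ∈ range n, (1 / 2 : ℝ) ^ i := (mul_sum ..).symm
    _ ≤ c * 2 := mul_le_mul_of_nonneg_left (sum_geometric_two_le n) hc
    _ = 2 * c := mul_comm c 2

lemma abs_integral_sub_le_of_forall_abs_sub_le {Ω : Type*} [MeasurableSpace Ω] {μ : Measure Ω}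
    [IsProbabilityMeasure μ] {f : Ω → ℝ} (hf : Integrable f μ) {a C : ℝ}
    (hfa : ∀ ω, |f ω - a| ≤ C) : |∫ ω, f ω ∂μ - a| ≤ C := by
  have hsub : ∫ ω, f ω ∂μ - a = ∫ ω, (f ω - a) ∂μ := by
    rw [integral_sub hf (integrable_const a), integral_const, probReal_univ, one_smul]
  have hnorm := norm_integral_le_of_norm_le_const (μ := μ) (f := fun ω => f ω - a)
    (ae_of_all _ fun ω => by simpa only [Real.norm_eq_abs] using hfa ω)
  simpa [hsub] using hnorm

lemma measurable_initialSegment {α : Type*} [MeasurableSpace α] {n : ℕ} :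
    Measurable fun (w : ℕ → α) (i : Fin n) => w i :=
  measurable_pi_lambda _ fun _ => measurable_pi_apply _

section InitialSegment

variable {α : Type*} [Fintype α] [MeasurableSpace α] [MeasurableSingletonClass α]
  (μ : Measure (ℕ → α)) [IsFiniteMeasure μ] {n : ℕ} (F : (Fin n → α) → ℝ)

lemma integrable_comp_initialSegment : Integrable (fun w => F fun i => w i) μ :=
  Integrable.of_finite.comp_measurable measurable_initialSegment

lemma integral_comp_initialSegment :
    ∫ w, F (fun i => w i) ∂μ = ∑ s, μ.real {w | ∀ i : Fin n, w i = s i} * F s := by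
  rw [← integral_map measurable_initialSegment.aemeasurable
    Integrable.of_finite.aestronglyMeasurable, integral_fintype Integrable.of_finite]
  refine sum_congr rfl fun s _ => ?_
  rw [map_measureReal_apply measurable_initialSegment (measurableSet_singleton s), smul_eq_mul]
  congr 2
  ext w
  simp [funext_iff]

end InitialSegment

/-- `orbitFin g n s x` applies `g (s 0)` first, like `orbitW`. -/
def orbitFin {X α : Type*} (g : α → X → X) : (n : ℕ) → (Fin n → α) → X → X
  | 0, _, x => x
  | n + 1, s, x => orbitFin g n (Fin.tail s) (g (s 0) x)

lemma sum_orbitFin_succ {X α : Type*} [Fintype α] (g : α → X → X) (f : X → ℝ) (n : ℕ) (x : X) :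
    ∑ s : Fin (n + 1) → α, f (orbitFin g (n + 1) s x)
      = ∑ j, ∑ s : Fin n → α, f (orbitFin g n s (g j x)) := by
  rw [← (Fin.consEquiv fun _ => α).sum_comp, Fintype.sum_prod_type]
  rfl

section RandomOrbit

variable {X : Type*} {k : ℕ} (d : Fin k → ℕ) (h : X → ℝ) (g : Fin k → X → X)

lemma orbitW_succ_eq (w : ℕ → Fin k) (n : ℕ) (x : X) :
    orbitW g w (n + 1) x = orbitW g (fun i => w (i + 1)) n (g (w 0) x) := by
  induction n with
  | zero => rfl
  | succ n ih => exact congrArg (g (w (n + 1))) ih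

lemma orbitW_eq_orbitFin (w : ℕ → Fin k) (n : ℕ) (x : X) :
    orbitW g w n x = orbitFin g n (fun i => w i) x := by
  induction n generalizing w x with
  | zero => rfl
  | succ n ih => rw [orbitW_succ_eq, ih]; rfl

/-- The `n`-th approximant of `ĥ_w x`. -/
noncomputable def heightApprox (w : ℕ → Fin k) (n : ℕ) (x : X) : ℝ :=
  h (orbitW g w n x) / ∏ i ∈ range n, (d (w i) : ℝ)

lemma heightApprox_eq (w : ℕ → Fin k) (n : ℕ) (x : X) :
    heightApprox d h g w n x
      = h (orbitFin g n (fun i => w i) x) / ∏ i : Fin n, (d (w i) : ℝ) := by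
  rw [heightApprox, orbitW_eq_orbitFin, Fin.prod_univ_eq_prod_range (fun i => (d (w i) : ℝ))]

lemma abs_heightApprox_sub_le (hd : ∀ j, 2 ≤ d j) {c : ℝ}
    (hb : ∀ j x, |h (g j x) / (d j : ℝ) - h x| ≤ c) (w : ℕ → Fin k) (n : ℕ) (x : X) :
    |heightApprox d h g w n x - h x| ≤ 2 * c := by
  have hc : 0 ≤ c := (abs_nonneg _).trans (hb (w 0) x)
  have hprod (m : ℕ) : (2 : ℝ) ^ m ≤ ∏ i ∈ range m, (d (w i) : ℝ) := by
    have := pow_card_le_prod (range m) (fun i => d (w i)) 2 fun i _ => hd (w i)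
    rw [card_range] at this
    exact_mod_cast this
  have hstep (m : ℕ) : |heightApprox d h g w (m + 1) x - heightApprox d h g w m x| ≤ c / 2 ^ m := by
    have hdm : (d (w m) : ℝ) ≠ 0 := by have := hd (w m); positivity
    have hP : (0 : ℝ) < ∏ i ∈ range m, (d (w i) : ℝ) := (pow_pos two_pos m).trans_le (hprod m)
    have hdiff : heightApprox d h g w (m + 1) x - heightApprox d h g w m x
        = (h (g (w m) (orbitW g w m x)) / d (w m) - h (orbitW g w m x))
          / ∏ i ∈ range m, (d (w i) : ℝ) := by
      simp only [heightApprox, orbitW, prod_range_succ]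
      field_simp
    rw [hdiff, abs_div, abs_of_pos hP]
    exact div_le_div₀ hc (hb _ _) (by positivity) (hprod m)
  simpa [heightApprox, orbitW] using
    abs_sub_zero_le_two_mul_of_abs_succ_sub_le (a := (heightApprox d h g w · x)) hstep n

variable {d} (μ : Measure (ℕ → Fin k))

lemma integrable_heightApprox [IsFiniteMeasure μ] (n : ℕ) (x : X) :
    Integrable (fun w => heightApprox d h g w n x) μ := by
  simp only [heightApprox_eq]
  exact integrable_comp_initialSegment μ
    (fun s : Fin n → Fin k => h (orbitFin g n s x) / ∏ i, (d (s i) : ℝ))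

lemma measureReal_cylinder
    (hμ : ∀ (n : ℕ) (s : Fin n → Fin k),
      μ {w | ∀ i : Fin n, w i = s i}
        = ∏ i : Fin n, ((d (s i) : ENNReal) / (∑ j : Fin k, (d j : ENNReal))))
    (n : ℕ) (s : Fin n → Fin k) :
    μ.real {w | ∀ i : Fin n, w i = s i} = ∏ i, (d (s i) : ℝ) / ∑ j, (d j : ℝ) := by
  rw [measureReal_def, hμ n s, ENNReal.toReal_prod]
  refine prod_congr rfl fun i _ => ?_
  rw [ENNReal.toReal_div, ENNReal.toReal_sum fun _ _ => ENNReal.natCast_ne_top _]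
  simp

variable [IsFiniteMeasure μ]

lemma integral_heightApprox (hd : ∀ j, 0 < d j)
    (hcyl : ∀ (n : ℕ) (s : Fin n → Fin k),
      μ.real {w | ∀ i : Fin n, w i = s i} = ∏ i, (d (s i) : ℝ) / ∑ j, (d j : ℝ))
    (n : ℕ) (x : X) :
    ∫ w, heightApprox d h g w n x ∂μ
      = (∑ s : Fin n → Fin k, h (orbitFin g n s x)) / (∑ j, (d j : ℝ)) ^ n := by
  simp_rw [heightApprox_eq]
  rw [integral_comp_initialSegment μ (fun s => h (orbitFin g n s x) / ∏ i, (d (s i) : ℝ)), sum_div]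
  refine sum_congr rfl fun s _ => ?_
  have hprod : ∏ i, (d (s i) : ℝ) ≠ 0 := prod_ne_zero_iff.2 fun i _ => by
    have := hd (s i); positivity
  rw [hcyl, prod_div_distrib, prod_const, card_univ, Fintype.card_fin]
  field_simp

lemma sum_integral_heightApprox_comp (hd : ∀ j, 0 < d j)
    (hcyl : ∀ (n : ℕ) (s : Fin n → Fin k),
      μ.real {w | ∀ i : Fin n, w i = s i} = ∏ i, (d (s i) : ℝ) / ∑ j, (d j : ℝ))
    (hD : ∑ j, (d j : ℝ) ≠ 0) (n : ℕ) (x : X) :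
    ∑ j, ∫ w, heightApprox d h g w n (g j x) ∂μ
      = (∑ j, (d j : ℝ)) * ∫ w, heightApprox d h g w (n + 1) x ∂μ := by
  simp only [integral_heightApprox h g μ hd hcyl, sum_orbitFin_succ, ← sum_div, pow_succ]
  field_simp

lemma tendsto_integral_heightApprox (hd : ∀ j, 2 ≤ d j) {c : ℝ}
    (hb : ∀ j x, |h (g j x) / (d j : ℝ) - h x| ≤ c) {x : X} {H : (ℕ → Fin k) → ℝ}
    (hH : ∀ w, Tendsto (fun n => heightApprox d h g w n x) atTop (nhds (H w))) :
    Tendsto (fun n => ∫ w, heightApprox d h g w n x ∂μ) atTop (nhds (∫ w, H w ∂μ)) := by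
  refine tendsto_integral_of_dominated_convergence (fun _ => |h x| + 2 * c)
    (fun n => (integrable_heightApprox h g μ n x).aestronglyMeasurable) (integrable_const _)
    (fun n => ae_of_all _ fun w => ?_) (ae_of_all _ hH)
  rw [Real.norm_eq_abs]
  linarith [abs_sub_abs_le_abs_sub (heightApprox d h g w n x) (h x),
    abs_heightApprox_sub_le d h g hd hb w n x]

end RandomOrbit

theorem stmt9_general {X : Type*} (k : ℕ) (d : Fin k → ℕ) (hd : ∀ j, 2 ≤ d j)
    (h : X → ℝ) (g : Fin k → X → X) (c : ℝ)
    (hb : ∀ j x, |h (g j x) / (d j : ℝ) - h x| ≤ c)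
    (μ : Measure (ℕ → Fin k))
    -- μ is the product of the measures ν with ν {j} = d j / (d 1 + ⋯ + d k),
    -- characterized by its values on cylinder sets:
    (hμ : ∀ (n : ℕ) (s : Fin n → Fin k),
      μ {w | ∀ i : Fin n, w i = s i}
        = ∏ i : Fin n, ((d (s i) : ENNReal) / (∑ j : Fin k, (d j : ENNReal))))
    (H : (ℕ → Fin k) → X → ℝ)
    (hH : ∀ w x, Tendsto
      (fun n => h (orbitW g w n x) / (∏ i ∈ Finset.range n, (d (w i) : ℝ)))
      atTop (nhds (H w x))) :
    ∀ x : X,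
      (∑ j : Fin k, (∫ w, H w (g j x) ∂μ))
        = (∑ j : Fin k, (d j : ℝ)) * ∫ w, H w x ∂μ ∧
      |(∫ w, H w x ∂μ) - h x| ≤ 2 * c := by
  have : IsProbabilityMeasure μ := ⟨by simpa using hμ 0 Fin.elim0⟩
  have hd_pos (j : Fin k) : 0 < d j := two_pos.trans_le (hd j)
  have hD : ∑ j, (d j : ℝ) ≠ 0 := by
    obtain ⟨w⟩ := nonempty_of_isProbabilityMeasure μ
    exact (sum_pos (fun j _ => Nat.cast_pos.2 (hd_pos j)) ⟨w 0, mem_univ _⟩).ne'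
  have hlim (y : X) := tendsto_integral_heightApprox h g μ hd hb (hH · y)
  intro x
  refine ⟨tendsto_nhds_unique (tendsto_finsetSum _ fun j _ => hlim (g j x)) ?_, ?_⟩
  · simp_rw [sum_integral_heightApprox_comp h g μ hd_pos (measureReal_cylinder μ hμ) hD]
    exact ((hlim x).comp (tendsto_add_atTop_nat 1)).const_mul _
  · exact le_of_tendsto ((hlim x).sub_const (h x)).abs (Eventually.of_forall fun n =>
      abs_integral_sub_le_of_forall_abs_sub_le (integrable_heightApprox h g μ n x)
        fun w => abs_heightApprox_sub_le d h g hd hb w n x)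

theorem stmt9 {X : Type*} (k : ℕ) (d : Fin k → ℕ) (hd : ∀ j, 2 ≤ d j)
    (h : X → ℝ) (g : Fin k → X → X) (c : ℝ) (hc : 0 ≤ c)
    (hb : ∀ j x, |h (g j x) / (d j : ℝ) - h x| ≤ c)
    (μ : Measure (ℕ → Fin k))
    -- μ is the product of the measures ν with ν {j} = d j / (d 1 + ⋯ + d k),
    -- characterized by its values on cylinder sets:
    (hμ : ∀ (n : ℕ) (s : Fin n → Fin k),
      μ {w | ∀ i : Fin n, w i = s i}
        = ∏ i : Fin n, ((d (s i) : ENNReal) / (∑ j : Fin k, (d j : ENNReal))))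
    (H : (ℕ → Fin k) → X → ℝ)
    (hH : ∀ w x, Tendsto
      (fun n => h (orbitW g w n x) / (∏ i ∈ Finset.range n, (d (w i) : ℝ)))
      atTop (nhds (H w x))) :
    ∀ x : X,
      (∑ j : Fin k, (∫ w, H w (g j x) ∂μ))
        = (∑ j : Fin k, (d j : ℝ)) * ∫ w, H w x ∂μ ∧
      |(∫ w, H w x ∂μ) - h x| ≤ 2 * c :=
  stmt9_general k d hd h g c hb μ hμ H hH
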